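/- arXiv:1603.07699 — 4 statements merged into one kernel-verified Lean document; each statement's English description precedes it below -/
import Mathlib

section
/- A 1-Lipschitz function f : ℤ_p → ℤ_p preserves the Haar measure if and only if for every k ≥ 1, the induced map f_k : ℤ/p^kℤ → ℤ/p^kℤ, given by reduction of f modulo p^k, is a bijection. -/
open MeasureTheory

variable (p : ℕ) [Fact p.Prime]

noncomputable instance : MeasurableSpace ℤ_[p] := borel _
instance : BorelSpace ℤ_[p] := ⟨rfl⟩

/-- The normalized Haar measure on `ℤ_[p]` (total mass 1). -/
noncomputable def haarZp : Measure ℤ_[p] := Measure.addHaarMeasure ⊤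

/-!
The fibres of `toZModPow k` are the closed balls of radius `p ^ (-k)`; they form a π-system
generating the Borel σ-algebra, and by translation invariance all fibres of the same level have
the same Haar measure. For a 1-Lipschitz `f`, the preimage under `f` of the fibre over `a` is the
union of the fibres over `f_k ⁻¹' {a}`. If `f` preserves the measure this union has positive
measure, so `f_k` is surjective, hence bijective on the finite ring `ℤ/p^kℤ`. Conversely, if every
`f_k` is bijective the union is a single fibre, so `μ ∘ f⁻¹` and `μ` agree on the π-system.
-/

namespace PadicInt

variable {p}

theorem toZModPow_eq_iff_norm_sub_le {k : ℕ} {x y : ℤ_[p]} :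
    toZModPow k x = toZModPow k y ↔ ‖x - y‖ ≤ (p : ℝ) ^ (-(k : ℤ)) := by
  rw [norm_le_pow_iff_mem_span_pow, ← ker_toZModPow, RingHom.mem_ker, map_sub, sub_eq_zero]

theorem preimage_toZModPow_eq_closedBall (k : ℕ) (x : ℤ_[p]) :
    toZModPow k ⁻¹' {toZModPow k x} = Metric.closedBall x ((p : ℝ) ^ (-(k : ℤ))) := by
  ext y
  simp [toZModPow_eq_iff_norm_sub_le, dist_eq_norm]

theorem isOpen_preimage_toZModPow (k : ℕ) (a : ZMod (p ^ k)) :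
    IsOpen (toZModPow k ⁻¹' {a}) := by
  refine isOpen_iff_forall_mem_open.2 fun x hx => ?_
  rw [Set.mem_preimage, Set.mem_singleton_iff] at hx
  have hr : (0 : ℝ) < (p : ℝ) ^ (-(k : ℤ)) := zpow_pos (mod_cast (Fact.out : p.Prime).pos) _
  rw [← hx, preimage_toZModPow_eq_closedBall]
  exact ⟨_, subset_rfl, IsUltrametricDist.isOpen_closedBall x hr.ne',
    Metric.mem_closedBall_self hr.le⟩

theorem toZModPow_natCast_val (k : ℕ) (a : ZMod (p ^ k)) :
    toZModPow k ((a.val : ℕ) : ℤ_[p]) = a := by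
  rw [map_natCast, ZMod.natCast_zmod_val]

theorem measure_preimage_toZModPow_eq (μ : Measure ℤ_[p]) [μ.IsAddLeftInvariant] (k : ℕ)
    (a b : ZMod (p ^ k)) : μ (toZModPow k ⁻¹' {a}) = μ (toZModPow k ⁻¹' {b}) := by
  have htranslate : (((b - a).val : ℤ_[p]) + ·) ⁻¹' (toZModPow k ⁻¹' {b}) =
      toZModPow k ⁻¹' {a} := by
    ext x
    simp only [Set.mem_preimage, Set.mem_singleton_iff, map_add, toZModPow_natCast_val]
    constructor <;> intro h <;> linear_combination h
  rw [← htranslate, measure_preimage_add]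

variable (p) in
def residueClasses : Set (Set ℤ_[p]) :=
  {s | ∃ k, ∃ a : ZMod (p ^ k), s = toZModPow k ⁻¹' {a}}

theorem preimage_toZModPow_subset_of_le {k l : ℕ} (hkl : k ≤ l) (x : ℤ_[p]) :
    toZModPow l ⁻¹' {toZModPow l x} ⊆ toZModPow k ⁻¹' {toZModPow k x} := fun y hy => by
  rw [Set.mem_preimage, Set.mem_singleton_iff] at hy ⊢
  rw [← cast_toZModPow k l hkl, hy, cast_toZModPow k l hkl]

theorem isPiSystem_residueClasses : IsPiSystem (residueClasses p) := by
  rintro _ ⟨k, _, rfl⟩ _ ⟨l, _, rfl⟩ ⟨x, rfl, rfl⟩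
  rcases le_total k l with hkl | hlk
  · rw [Set.inter_eq_right.2 (preimage_toZModPow_subset_of_le hkl x)]
    exact ⟨l, _, rfl⟩
  · rw [Set.inter_eq_left.2 (preimage_toZModPow_subset_of_le hlk x)]
    exact ⟨k, _, rfl⟩

theorem isTopologicalBasis_residueClasses :
    TopologicalSpace.IsTopologicalBasis (residueClasses p) := by
  refine TopologicalSpace.isTopologicalBasis_of_isOpen_of_nhds ?_ fun x u hxu hu => ?_
  · rintro _ ⟨k, a, rfl⟩
    exact isOpen_preimage_toZModPow k a
  obtain ⟨ε, hε, hball⟩ := Metric.isOpen_iff.1 hu x hxu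
  obtain ⟨k, hk⟩ := exists_pow_neg_lt p hε
  refine ⟨_, ⟨k, toZModPow k x, rfl⟩, rfl, ?_⟩
  rw [preimage_toZModPow_eq_closedBall]
  exact (Metric.closedBall_subset_ball hk).trans hball

noncomputable def residueMap (f : ℤ_[p] → ℤ_[p]) (k : ℕ) (z : ZMod (p ^ k)) : ZMod (p ^ k) :=
  toZModPow k (f (z.val : ℤ_[p]))

variable {f : ℤ_[p] → ℤ_[p]}

theorem toZModPow_comp_eq_residueMap_comp (hf : LipschitzWith 1 f) (k : ℕ) :
    toZModPow k ∘ f = residueMap f k ∘ toZModPow k := by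
  funext x
  have hx := toZModPow_eq_iff_norm_sub_le.1 (toZModPow_natCast_val k (toZModPow k x)).symm
  refine toZModPow_eq_iff_norm_sub_le.2 ((hf.norm_sub_le x _).trans ?_)
  simpa using hx

theorem surjective_residueMap_of_measurePreserving (μ : Measure ℤ_[p]) [μ.IsOpenPosMeasure]
    (hf : LipschitzWith 1 f) (h : MeasurePreserving f μ μ) (k : ℕ) :
    Function.Surjective (residueMap f k) := by
  intro a
  have hpos : 0 < μ (f ⁻¹' (toZModPow k ⁻¹' {a})) := by
    rw [h.measure_preimage (isOpen_preimage_toZModPow k a).measurableSet.nullMeasurableSet]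
    exact (isOpen_preimage_toZModPow k a).measure_pos μ ⟨_, toZModPow_natCast_val k a⟩
  obtain ⟨x, hx⟩ := nonempty_of_measure_ne_zero hpos.ne'
  exact ⟨toZModPow k x, (congrFun (toZModPow_comp_eq_residueMap_comp hf k) x).symm.trans hx⟩

theorem measurePreserving_of_bijective_residueMap (μ : Measure ℤ_[p]) [IsFiniteMeasure μ]
    [μ.IsAddLeftInvariant] (hf : LipschitzWith 1 f)
    (hb : ∀ k, Function.Bijective (residueMap f k)) :
    MeasurePreserving f μ μ := by
  have hm : Measurable f := hf.continuous.measurable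
  refine ⟨hm, ext_of_generate_finite (residueClasses p)
    (BorelSpace.measurable_eq.trans isTopologicalBasis_residueClasses.borel_eq_generateFrom)
    isPiSystem_residueClasses ?_ ?_⟩
  · rintro _ ⟨k, a, rfl⟩
    obtain ⟨z, hz⟩ := (hb k).2 a
    have hfiber : residueMap f k ⁻¹' {a} = {z} :=
      Set.ext fun w => ⟨fun hw => (hb k).1 (hw.trans hz.symm), by rintro rfl; exact hz⟩
    rw [Measure.map_apply hm (isOpen_preimage_toZModPow k a).measurableSet, ← Set.preimage_comp,
      toZModPow_comp_eq_residueMap_comp hf, Set.preimage_comp, hfiber]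
    exact measure_preimage_toZModPow_eq μ k z a
  · rw [Measure.map_apply hm MeasurableSet.univ, Set.preimage_univ]

theorem measurePreserving_iff_forall_bijective_residueMap (μ : Measure ℤ_[p])
    [μ.IsAddHaarMeasure] (hf : LipschitzWith 1 f) :
    MeasurePreserving f μ μ ↔ ∀ k, Function.Bijective (residueMap f k) :=
  ⟨fun h k => Finite.surjective_iff_bijective.1
      (surjective_residueMap_of_measurePreserving μ hf h k),
    measurePreserving_of_bijective_residueMap μ hf⟩

end PadicInt

instance : (haarZp p).IsAddHaarMeasure := by
  unfold haarZp
  infer_instance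

theorem stmt_2 (f : ℤ_[p] → ℤ_[p])
    (hlip : ∀ x y : ℤ_[p], ‖f x - f y‖ ≤ ‖x - y‖) :
    MeasurePreserving f (haarZp p) (haarZp p) ↔
      ∀ k : ℕ, 1 ≤ k →
        Function.Bijective
          (fun z : ZMod (p ^ k) => PadicInt.toZModPow k (f ((z.val : ℕ) : ℤ_[p]))) := by
  have hf : LipschitzWith 1 f :=
    LipschitzWith.of_dist_le_mul fun x y => by simpa [dist_eq_norm] using hlip x y
  rw [PadicInt.measurePreserving_iff_forall_bijective_residueMap (haarZp p) hf]
  refine ⟨fun h k _ => h k, fun h k => ?_⟩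
  rcases k.eq_zero_or_pos with rfl | hk
  · have : Subsingleton (ZMod (p ^ 0)) := by rw [pow_zero]; infer_instance
    exact Function.bijective_of_subsingleton _
  · exact h k hk
end

section
/- If a 1-Lipschitz function f : ℤ_p → ℤ_p preserves the Haar measure, then f is a bijection on ℤ_p. -/
open MeasureTheory

variable (p : ℕ) [Fact p.Prime]

/-!
Injectivity: if `f a = f b` with `a ≠ b`, the two disjoint balls of radius `dist a b / 3`
around `a` and `b` both lie in the preimage of the ball of that radius around `f a`, so this
preimage has twice the measure of a ball, while measure preservation says it has the measure of
one ball (by translation invariance all balls of a given radius have the same measure).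
Surjectivity: the complement of the closure of the range is an open set with empty preimage,
hence null, hence empty; and the range of a continuous map on a compact space is closed.
-/

open Set Metric

theorem LipschitzWith.mapsTo_closedBall_of_one {X Y : Type*} [PseudoMetricSpace X]
    [PseudoMetricSpace Y] {f : X → Y} (hf : LipschitzWith 1 f) (x : X) (r : ℝ) :
    MapsTo f (closedBall x r) (closedBall (f x) r) := by
  simpa using hf.mapsTo_closedBall x r

theorem LipschitzWith.injective_of_measurePreserving {X : Type*} [MetricSpace X] [ProperSpace X]
    [MeasurableSpace X] [OpensMeasurableSpace X] {μ : Measure X} [μ.IsOpenPosMeasure]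
    [IsFiniteMeasureOnCompacts μ] (hball : ∀ x y r, μ (closedBall x r) = μ (closedBall y r))
    {f : X → X} (hf : LipschitzWith 1 f) (hmp : MeasurePreserving f μ μ) :
    Function.Injective f := by
  intro a b hab
  by_contra hne
  have hab_pos : 0 < dist a b := dist_pos.2 hne
  obtain ⟨r, hr, hr_small⟩ : ∃ r, 0 < r ∧ r + r < dist a b :=
    ⟨dist a b / 3, by positivity, by linarith⟩
  have hdisj : Disjoint (closedBall a r) (closedBall b r) :=
    closedBall_disjoint_closedBall hr_small
  have hsub : closedBall a r ∪ closedBall b r ⊆ f ⁻¹' closedBall (f a) r :=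
    union_subset (hf.mapsTo_closedBall_of_one a r) (hab ▸ hf.mapsTo_closedBall_of_one b r)
  have hdouble : μ (closedBall a r) + μ (closedBall a r) ≤ μ (closedBall a r) :=
    calc μ (closedBall a r) + μ (closedBall a r)
        = μ (closedBall a r ∪ closedBall b r) := by
          rw [measure_union hdisj measurableSet_closedBall, hball b a]
      _ ≤ μ (f ⁻¹' closedBall (f a) r) := measure_mono hsub
      _ = μ (closedBall a r) := by
          rw [hmp.measure_preimage measurableSet_closedBall.nullMeasurableSet, hball]
  exact (ENNReal.lt_add_right measure_closedBall_lt_top.ne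
    (measure_closedBall_pos μ a hr).ne').not_ge hdouble

theorem MeasureTheory.MeasurePreserving.denseRange {X Y : Type*} [MeasurableSpace X]
    [TopologicalSpace Y] [MeasurableSpace Y] [OpensMeasurableSpace Y] {μ : Measure X}
    {ν : Measure Y} [ν.IsOpenPosMeasure] {f : X → Y} (hf : MeasurePreserving f μ ν) :
    DenseRange f := by
  refine dense_iff_inter_open.2 fun U hU hne => ?_
  by_contra hdisj
  have hpre : f ⁻¹' U = ∅ :=
    eq_empty_of_forall_notMem fun x hx => hdisj ⟨f x, hx, mem_range_self x⟩
  have hpos := hU.measure_pos ν hne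
  rw [← hf.measure_preimage hU.measurableSet.nullMeasurableSet, hpre, measure_empty] at hpos
  exact lt_irrefl 0 hpos

theorem Continuous.surjective_of_measurePreserving {X Y : Type*} [TopologicalSpace X]
    [CompactSpace X] [MeasurableSpace X] [TopologicalSpace Y] [T2Space Y] [MeasurableSpace Y]
    [OpensMeasurableSpace Y] {μ : Measure X} {ν : Measure Y} [ν.IsOpenPosMeasure] {f : X → Y}
    (hcont : Continuous f) (hmp : MeasurePreserving f μ ν) : Function.Surjective f :=
  range_eq_univ.1 <| (isCompact_range hcont).isClosed.closure_eq ▸ hmp.denseRange.closure_eq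

theorem stmt_3 (f : ℤ_[p] → ℤ_[p])
    (hlip : ∀ x y : ℤ_[p], ‖f x - f y‖ ≤ ‖x - y‖)
    (hmp : MeasurePreserving f (haarZp p) (haarZp p)) :
    Function.Bijective f := by
  have hf : LipschitzWith 1 f := LipschitzWith.mk_one fun x y => by
    simpa only [dist_eq_norm] using hlip x y
  have : (haarZp p).IsAddHaarMeasure := Measure.isAddHaarMeasure_addHaarMeasure ⊤
  refine ⟨hf.injective_of_measurePreserving (fun x y r => ?_) hmp,
    hf.continuous.surjective_of_measurePreserving hmp⟩
  rw [Measure.addHaar_closedBall_center, Measure.addHaar_closedBall_center (haarZp p) y]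
end

section
/- Let f : ℤ_p → ℤ_p be multiplicative (f(x·y) = f(x)·f(y) for all x, y), 1-Lipschitz, and not identically 0 nor identically 1. Then f(0) = 0, f(1) = 1, and there exists s ∈ {0,1,...,p-2} such that f(z) ≡ z^s (mod p) for all z ∈ ℤ_p with |z|_p = 1. -/
/-!
A multiplicative 1-Lipschitz `f` respects congruence modulo `p`, so it induces a monoid
endomorphism of `ZMod p`. That endomorphism restricts to the cyclic group `(ZMod p)ˣ` of order
`p - 1`, where every endomorphism is a power map `u ↦ u ^ s` with `s` determined modulo `p - 1`.
-/

section MapMul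

variable {M N : Type*} [MonoidWithZero N] {f : M → N}

theorem apply_zero_eq_zero_of_map_mul [MulZeroClass M] [IsRightCancelMulZero N]
    (hmul : ∀ x y, f (x * y) = f x * f y) (hne1 : ∃ x, f x ≠ 1) : f 0 = 0 := by
  obtain ⟨x, hx⟩ := hne1
  have h : f x * f 0 = f 0 := by rw [← hmul, mul_zero]
  exact (mul_left_eq_self₀.mp h).resolve_left hx

theorem apply_one_eq_one_of_map_mul [MulOneClass M] [IsLeftCancelMulZero N]
    (hmul : ∀ x y, f (x * y) = f x * f y) (hne0 : ∃ x, f x ≠ 0) : f 1 = 1 := by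
  obtain ⟨x, hx⟩ := hne0
  have h : f x * f 1 = f x := by rw [← hmul, mul_one]
  exact (mul_eq_left₀ hx).mp h

end MapMul

theorem FiniteField.exists_pow_eq_of_monoidHom {K : Type*} [Field K] [Fintype K] (g : K →* K) :
    ∃ s < Fintype.card K - 1, ∀ a : K, a ≠ 0 → g a = a ^ s := by
  obtain ⟨m, hm⟩ := (Units.map g).map_cyclic
  have hq : 0 < ((Fintype.card K - 1 : ℕ) : ℤ) := by
    have := Fintype.one_lt_card (α := K); omega
  have hlt := Int.emod_lt_of_pos m hq
  refine ⟨(m % (Fintype.card K - 1 : ℕ)).toNat, by omega, fun a ha => ?_⟩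
  have hu : (Units.mk0 a ha) ^ (Fintype.card K - 1) = 1 := by
    ext; simpa using FiniteField.pow_card_sub_one_eq_one a ha
  have := congrArg Units.val (hm (Units.mk0 a ha))
  rw [zpow_eq_zpow_emod' m hu, ← Int.toNat_of_nonneg (Int.emod_nonneg _ hq.ne'),
    zpow_natCast] at this
  simpa using this

namespace PadicInt

variable {p : ℕ} [Fact p.Prime]

theorem toZMod_eq_zero_iff {z : ℤ_[p]} : toZMod z = 0 ↔ ‖z‖ < 1 := by
  rw [← RingHom.mem_ker, ker_toZMod, IsLocalRing.mem_maximalIdeal, mem_nonunits]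

theorem toZMod_apply_eq_of_lipschitz {f : ℤ_[p] → ℤ_[p]}
    (hlip : ∀ x y, ‖f x - f y‖ ≤ ‖x - y‖) {x y : ℤ_[p]} (h : toZMod x = toZMod y) :
    toZMod (f x) = toZMod (f y) := by
  rw [← sub_eq_zero, ← map_sub, toZMod_eq_zero_iff] at h ⊢
  exact (hlip x y).trans_lt h

theorem toZMod_natCast_val (a : ZMod p) : toZMod (a.val : ℤ_[p]) = a := by
  rw [map_natCast, ZMod.natCast_val, ZMod.cast_id]

variable {f : ℤ_[p] → ℤ_[p]}

noncomputable def residueMonoidHom (hlip : ∀ x y, ‖f x - f y‖ ≤ ‖x - y‖)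
    (hmul : ∀ x y, f (x * y) = f x * f y) (h1 : f 1 = 1) :
    ZMod p →* ZMod p where
  toFun a := toZMod (f (a.val : ℤ_[p]))
  map_one' := by
    rw [toZMod_apply_eq_of_lipschitz hlip (y := 1) (by rw [toZMod_natCast_val, map_one]), h1,
      map_one]
  map_mul' a b := by
    rw [← map_mul, ← hmul]
    exact toZMod_apply_eq_of_lipschitz hlip (by simp only [map_mul, toZMod_natCast_val])

theorem toZMod_apply_eq_residueMonoidHom (hlip : ∀ x y, ‖f x - f y‖ ≤ ‖x - y‖)
    (hmul : ∀ x y, f (x * y) = f x * f y) (h1 : f 1 = 1) (z : ℤ_[p]) :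
    toZMod (f z) = residueMonoidHom hlip hmul h1 (toZMod z) :=
  toZMod_apply_eq_of_lipschitz hlip (toZMod_natCast_val _).symm

end PadicInt

theorem stmt_4 (p : ℕ) [Fact p.Prime] (f : ℤ_[p] → ℤ_[p])
    (hlip : ∀ x y : ℤ_[p], ‖f x - f y‖ ≤ ‖x - y‖)
    (hmul : ∀ x y : ℤ_[p], f (x * y) = f x * f y)
    (hne0 : ∃ x : ℤ_[p], f x ≠ 0) (hne1 : ∃ x : ℤ_[p], f x ≠ 1) :
    f 0 = 0 ∧ f 1 = 1 ∧
      ∃ s : ℕ, s ≤ p - 2 ∧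
        ∀ z : ℤ_[p], ‖z‖ = 1 → PadicInt.toZMod (f z) = (PadicInt.toZMod z) ^ s := by
  have hf1 : f 1 = 1 := apply_one_eq_one_of_map_mul hmul hne0
  obtain ⟨s, hs, hpow⟩ :=
    FiniteField.exists_pow_eq_of_monoidHom (PadicInt.residueMonoidHom hlip hmul hf1)
  refine ⟨apply_zero_eq_zero_of_map_mul hmul hne1, hf1, s, by rw [ZMod.card] at hs; omega,
    fun z hz => ?_⟩
  rw [PadicInt.toZMod_apply_eq_residueMonoidHom hlip hmul hf1, hpow]
  exact ((PadicInt.isUnit_iff.mpr hz).map PadicInt.toZMod).ne_zero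
end

section
/- Let f : ℤ_p → ℤ_p be a 1-Lipschitz function whose coordinate functions are φ_k, i.e., the k-th digit of f(x) equals φ_k(x_0,...,x_k) where x_i are the digits of x. Then f(x XOR y) = f(x) XOR f(y) for all x, y if and only if each φ_k is ℤ/pℤ-linear: φ_k(x_0,...,x_k) = α_0^{(k)} x_0 + α_1^{(k)} x_1 + ... + α_k^{(k)} x_k (mod p) for some coefficients α_i^{(k)} ∈ {0,...,p-1}. -/
/-!
The digits of `pXOR p x y` are the digit-wise sums mod `p`, and every finite digit vector is
realised by some `x : ℤ_[p]` (as the sum of its digit series). Hence `f` commutes with `pXOR`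
exactly when each `φ k` is additive on `(ZMod p)^(k+1)`, and an additive map between
`ZMod p`-modules is `ZMod p`-linear, i.e. a linear form `v ↦ ∑ αᵢ vᵢ`.
-/

variable (p : ℕ) [Fact p.Prime]

/-- The k-th digit of the canonical p-adic expansion of `x`. -/
noncomputable def digit (x : ℤ_[p]) (k : ℕ) : ℕ := x.appr (k + 1) / p ^ k

/-- Digit-wise addition modulo `p` on `ℤ_[p]`. -/
noncomputable def pXOR (x y : ℤ_[p]) : ℤ_[p] :=
  ∑' k : ℕ, (((digit p x k + digit p y k) % p : ℕ) : ℤ_[p]) * (p : ℤ_[p]) ^ k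

open Finset

theorem Nat.sum_range_mul_pow_lt {b : ℕ} (d : ℕ → ℕ) (hd : ∀ k, d k < b) (n : ℕ) :
    ∑ k ∈ range n, d k * b ^ k < b ^ n := by
  induction n with
  | zero => simp
  | succ n ih =>
    calc ∑ k ∈ range (n + 1), d k * b ^ k = ∑ k ∈ range n, d k * b ^ k + d n * b ^ n :=
          sum_range_succ _ _
      _ < b ^ n + d n * b ^ n := by gcongr
      _ = (d n + 1) * b ^ n := by ring
      _ ≤ b * b ^ n := Nat.mul_le_mul_right _ (hd n)
      _ = b ^ (n + 1) := by ring

theorem exists_sum_mul_iff_map_add {n : ℕ} {ι : Type*} [Fintype ι] [DecidableEq ι]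
    (F : (ι → ZMod n) → ZMod n) :
    (∃ α : ι → ZMod n, ∀ v, F v = ∑ i, α i * v i) ↔ ∀ u w, F (u + w) = F u + F w := by
  refine ⟨fun ⟨α, hα⟩ u w => by simp only [hα, Pi.add_apply, mul_add, sum_add_distrib], ?_⟩
  intro hF
  let L := (AddMonoidHom.mk' F hF).toZModLinearMap n
  refine ⟨fun i => F fun j => if i = j then 1 else 0, fun v => ?_⟩
  rw [show F v = L v from rfl, L.pi_apply_eq_sum_univ]
  simp only [smul_eq_mul, mul_comm]
  rfl

section Digits

variable {p}

theorem digit_lt (x : ℤ_[p]) (k : ℕ) : digit p x k < p := by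
  have hpk : 0 < p ^ k := pow_pos (Fact.out : p.Prime).pos k
  rw [digit, Nat.div_lt_iff_lt_mul hpk, ← pow_succ']
  exact x.appr_lt (k + 1)

theorem appr_succ_eq_add_digit (x : ℤ_[p]) (k : ℕ) :
    x.appr (k + 1) = x.appr k + digit p x k * p ^ k := by
  obtain ⟨c, hc⟩ := x.dvd_appr_sub_appr k (k + 1) (k.le_add_right 1)
  have hle := x.appr_mono (k.le_add_right 1)
  have hsucc : x.appr (k + 1) = x.appr k + p ^ k * c := by omega
  have hdigit : digit p x k = c := by
    rw [digit, hsucc, Nat.add_mul_div_left _ _ (pow_pos (Fact.out : p.Prime).pos k),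
      Nat.div_eq_of_lt (x.appr_lt k), zero_add]
  rw [hdigit, hsucc, mul_comm]

theorem appr_eq_sum_digit (x : ℤ_[p]) (n : ℕ) :
    x.appr n = ∑ k ∈ range n, digit p x k * p ^ k := by
  induction n with
  | zero => simp [PadicInt.appr]
  | succ n ih => rw [sum_range_succ, appr_succ_eq_add_digit, ih]

theorem appr_eq_of_pow_dvd_sub {x : ℤ_[p]} {n a : ℕ} (ha : a < p ^ n)
    (h : (p : ℤ_[p]) ^ n ∣ x - a) : x.appr n = a := by
  have hker : x - a ∈ RingHom.ker (PadicInt.toZModPow n) := by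
    rwa [PadicInt.ker_toZModPow, Ideal.mem_span_singleton]
  rw [RingHom.mem_ker, map_sub, sub_eq_zero, map_natCast] at hker
  change ((x.appr n : ℕ) : ZMod (p ^ n)) = a at hker
  rwa [ZMod.natCast_eq_natCast_iff', Nat.mod_eq_of_lt (x.appr_lt n), Nat.mod_eq_of_lt ha] at hker

theorem eq_of_digit_eq {x y : ℤ_[p]} (h : ∀ k, digit p x k = digit p y k) : x = y :=
  PadicInt.ext_of_toZModPow.mp fun n => by
    change ((x.appr n : ℕ) : ZMod (p ^ n)) = y.appr n
    simp only [appr_eq_sum_digit, h]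

theorem summable_mul_pow (c : ℕ → ℤ_[p]) : Summable fun k => c k * (p : ℤ_[p]) ^ k := by
  refine Summable.of_norm_bounded (g := fun k => (p : ℝ)⁻¹ ^ k)
    (summable_geometric_of_lt_one (by positivity)
      (inv_lt_one_of_one_lt₀ (by exact_mod_cast (Fact.out : p.Prime).one_lt))) fun k => ?_
  rw [norm_mul, norm_pow, PadicInt.norm_p]
  exact mul_le_of_le_one_left (by positivity) (PadicInt.norm_le_one _)

theorem appr_tsum_mul_pow (d : ℕ → ℕ) (hd : ∀ k, d k < p) (n : ℕ) :
    (∑' k, (d k : ℤ_[p]) * (p : ℤ_[p]) ^ k).appr n = ∑ k ∈ range n, d k * p ^ k := by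
  refine appr_eq_of_pow_dvd_sub (Nat.sum_range_mul_pow_lt d hd n) ?_
  have htail : ∀ i, (d (i + n) : ℤ_[p]) * (p : ℤ_[p]) ^ (i + n)
      = (d (i + n) : ℤ_[p]) * (p : ℤ_[p]) ^ i * (p : ℤ_[p]) ^ n := fun i => by ring
  rw [← (summable_mul_pow _).sum_add_tsum_nat_add n]
  push_cast
  rw [add_sub_cancel_left, tsum_congr htail, (summable_mul_pow _).tsum_mul_right]
  exact dvd_mul_left _ _

theorem digit_tsum_mul_pow (d : ℕ → ℕ) (hd : ∀ k, d k < p) (k : ℕ) :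
    digit p (∑' k, (d k : ℤ_[p]) * (p : ℤ_[p]) ^ k) k = d k := by
  rw [digit, appr_tsum_mul_pow d hd, sum_range_succ,
    Nat.add_mul_div_right _ _ (pow_pos (Fact.out : p.Prime).pos k),
    Nat.div_eq_of_lt (Nat.sum_range_mul_pow_lt d hd k), zero_add]

theorem exists_natCast_digit_eq (d : ℕ → ZMod p) :
    ∃ x : ℤ_[p], ∀ k, (digit p x k : ZMod p) = d k :=
  ⟨_, fun k => by rw [digit_tsum_mul_pow _ (fun k => ZMod.val_lt (d k)), ZMod.natCast_zmod_val]⟩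

theorem eq_of_natCast_digit_eq {x y : ℤ_[p]} (h : ∀ k, (digit p x k : ZMod p) = digit p y k) :
    x = y :=
  eq_of_digit_eq fun k => by
    simpa only [ZMod.val_cast_of_lt (digit_lt _ _)] using congrArg ZMod.val (h k)

theorem natCast_digit_pXOR (x y : ℤ_[p]) (k : ℕ) :
    (digit p (pXOR p x y) k : ZMod p) = digit p x k + digit p y k := by
  rw [pXOR, digit_tsum_mul_pow _ (fun _ => Nat.mod_lt _ (Fact.out : p.Prime).pos),
    ZMod.natCast_mod, Nat.cast_add]

theorem natCast_digit_pXOR_fin (x y : ℤ_[p]) (k : ℕ) :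
    (fun i : Fin (k + 1) => (digit p (pXOR p x y) i : ZMod p))
      = (fun i : Fin (k + 1) => (digit p x i : ZMod p))
        + fun i : Fin (k + 1) => (digit p y i : ZMod p) :=
  funext fun i => natCast_digit_pXOR x y i

theorem map_pXOR_iff_map_add (f : ℤ_[p] → ℤ_[p])
    (φ : (k : ℕ) → (Fin (k + 1) → ZMod p) → ZMod p)
    (hφ : ∀ x k, (digit p (f x) k : ZMod p) = φ k fun i => (digit p x i : ZMod p)) :
    (∀ x y, f (pXOR p x y) = pXOR p (f x) (f y)) ↔ ∀ k u w, φ k (u + w) = φ k u + φ k w := by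
  constructor
  · intro hf k u w
    obtain ⟨x, hx⟩ := exists_natCast_digit_eq fun i => if h : i < k + 1 then u ⟨i, h⟩ else 0
    obtain ⟨y, hy⟩ := exists_natCast_digit_eq fun i => if h : i < k + 1 then w ⟨i, h⟩ else 0
    have hxu : (fun i : Fin (k + 1) => (digit p x i : ZMod p)) = u :=
      funext fun i => by rw [hx, dif_pos i.isLt]
    have hyw : (fun i : Fin (k + 1) => (digit p y i : ZMod p)) = w :=
      funext fun i => by rw [hy, dif_pos i.isLt]
    calc φ k (u + w) = (digit p (f (pXOR p x y)) k : ZMod p) := by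
          rw [hφ, natCast_digit_pXOR_fin, hxu, hyw]
      _ = φ k u + φ k w := by rw [hf, natCast_digit_pXOR, hφ, hφ, hxu, hyw]
  · intro hφ_add x y
    refine eq_of_natCast_digit_eq (p := p) fun k => ?_
    rw [hφ, natCast_digit_pXOR_fin, hφ_add, natCast_digit_pXOR, hφ, hφ]

end Digits

theorem stmt_9 (f : ℤ_[p] → ℤ_[p])
    (φ : (k : ℕ) → (Fin (k + 1) → ZMod p) → ZMod p)
    (hφ : ∀ (x : ℤ_[p]) (k : ℕ),
      ((digit p (f x) k : ZMod p)) = φ k (fun i => (digit p x i : ZMod p))) :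
    (∀ x y : ℤ_[p], f (pXOR p x y) = pXOR p (f x) (f y)) ↔
      ∀ k : ℕ, ∃ α : Fin (k + 1) → ZMod p,
        ∀ v : Fin (k + 1) → ZMod p, φ k v = ∑ i, α i * v i := by
  rw [map_pXOR_iff_map_add f φ hφ]
  exact forall_congr' fun k => (exists_sum_mul_iff_map_add (φ k)).symm
end
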